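/- For every i ∈ [n] and j ∈ [d], the map x ↦ σ_{*,i}(x) is partially differentiable in x_j with ∂σ_{*,i}(x)/∂x_j = −A_{x,*,j} ∘ σ_{*,i}(x) + 2 σ_{*,*}(x) (σ_{*,i}(x) ∘ A_{x,*,j}) − A_{x,i,j} · σ_{*,i}(x). -/

import Mathlib

open Matrix

set_option maxHeartbeats 1000000

attribute [local instance] Matrix.linftyOpNormedRing Matrix.linftyOpNormedAlgebra

/-- `s_x := A x - b`. -/
noncomputable def sVec {n d : ℕ} (A : Matrix (Fin n) (Fin d) ℝ) (b : Fin n → ℝ)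
    (x : Fin d → ℝ) : Fin n → ℝ := A.mulVec x - b

/-- `A_x := S_x⁻¹ A` where `S_x := diag(s_x)`. -/
noncomputable def matAx {n d : ℕ} (A : Matrix (Fin n) (Fin d) ℝ) (b : Fin n → ℝ)
    (x : Fin d → ℝ) : Matrix (Fin n) (Fin d) ℝ := (Matrix.diagonal (sVec A b x))⁻¹ * A

/-- The leverage-score matrix `σ_{*,*}(x) := A_x (A_xᵀ A_x)⁻¹ A_xᵀ`. -/
noncomputable def sigM {n d : ℕ} (A : Matrix (Fin n) (Fin d) ℝ) (b : Fin n → ℝ)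
    (x : Fin d → ℝ) : Matrix (Fin n) (Fin n) ℝ :=
  matAx A b x * ((matAx A b x)ᵀ * matAx A b x)⁻¹ * (matAx A b x)ᵀ

variable {d' : ℕ}


lemma hasDerivAt_entry {F : ℝ → Matrix (Fin d') (Fin d') ℝ} {F' : Matrix (Fin d') (Fin d') ℝ}
    {t₀ : ℝ} (h : HasDerivAt F F' t₀) (k l : Fin d') :
    HasDerivAt (fun t => F t k l) (F' k l) t₀ := by
  let φ : Matrix (Fin d') (Fin d') ℝ →ₗ[ℝ] ℝ :=
    { toFun := fun X => X k l, map_add' := fun _ _ => rfl, map_smul' := fun _ _ => rfl }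
  have h2 := (LinearMap.toContinuousLinearMap φ).hasFDerivAt.comp_hasDerivAt t₀ h
  exact h2

lemma matrix_eq_sum_smul_std (X : Matrix (Fin d') (Fin d') ℝ) :
    X = ∑ p : Fin d' × Fin d', X p.1 p.2 • Matrix.single p.1 p.2 (1:ℝ) := by
  conv_lhs => rw [Matrix.matrix_eq_sum_single X]
  rw [Fintype.sum_prod_type]
  refine Finset.sum_congr rfl fun a _ => Finset.sum_congr rfl fun c _ => ?_
  rw [Matrix.smul_single, smul_eq_mul, mul_one]

lemma hasDerivAt_of_entries {F : ℝ → Matrix (Fin d') (Fin d') ℝ} {F' : Matrix (Fin d') (Fin d') ℝ}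
    {t₀ : ℝ} (h : ∀ k l, HasDerivAt (fun t => F t k l) (F' k l) t₀) :
    HasDerivAt F F' t₀ := by
  have h1 := HasDerivAt.fun_sum (u := (Finset.univ : Finset (Fin d' × Fin d')))
    (fun p _ => (h p.1 p.2).smul_const (Matrix.single p.1 p.2 (1:ℝ)))
  have h2 : F = fun y => ∑ p : Fin d' × Fin d', F y p.1 p.2 • Matrix.single p.1 p.2 (1:ℝ) :=
    funext fun y => matrix_eq_sum_smul_std (F y)
  rw [h2, matrix_eq_sum_smul_std F']
  exact h1

lemma hasDerivAt_matrix_inv {F : ℝ → Matrix (Fin d') (Fin d') ℝ} {F' : Matrix (Fin d') (Fin d') ℝ}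
    {t₀ : ℝ} (h : HasDerivAt F F' t₀) (hu : IsUnit (F t₀)) :
    HasDerivAt (fun t => (F t)⁻¹) (-((F t₀)⁻¹ * F' * (F t₀)⁻¹)) t₀ := by
  obtain ⟨u, hu'⟩ := hu
  have h1 : HasFDerivAt (Ring.inverse : Matrix (Fin d') (Fin d') ℝ → _)
      (-(ContinuousLinearMap.mulLeftRight ℝ _ (↑u⁻¹) (↑u⁻¹))) (F t₀) := by
    rw [← hu']; exact hasFDerivAt_ringInverse u
  have h2 := h1.comp_hasDerivAt t₀ h
  have h3 : ((Ring.inverse : Matrix (Fin d') (Fin d') ℝ → _) ∘ F) = fun t => (F t)⁻¹ :=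
    funext fun t => (Matrix.nonsing_inv_eq_ringInverse _).symm
  rw [h3] at h2
  refine h2.congr_deriv (Eq.symm ?_)
  have h4 : (↑u⁻¹ : Matrix (Fin d') (Fin d') ℝ) = (F t₀)⁻¹ := by
    rw [Matrix.coe_units_inv, hu']
  simp [h4]

lemma matAx_apply {n d : ℕ} (A : Matrix (Fin n) (Fin d) ℝ) (b : Fin n → ℝ)
    (y : Fin d → ℝ) (hy : ∀ k, sVec A b y k ≠ 0) (k : Fin n) (l : Fin d) :
    matAx A b y k l = A k l * (sVec A b y k)⁻¹ := by
  have hdiag : (Matrix.diagonal (sVec A b y))⁻¹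
      = Matrix.diagonal (fun k => (sVec A b y k)⁻¹) := by
    apply Matrix.inv_eq_left_inv
    rw [Matrix.diagonal_mul_diagonal,
      show (fun k => (sVec A b y k)⁻¹ * sVec A b y k) = fun _ => (1:ℝ) from
        funext fun k => inv_mul_cancel₀ (hy k), Matrix.diagonal_one]
  rw [matAx, hdiag, Matrix.diagonal_mul, mul_comm]


/-- For every `i ∈ [n]` and `j ∈ [d]`, the map `x ↦ σ_{*,i}(x)` (the `i`-th column of the
leverage-score matrix) is partially differentiable in `x_j` with
`∂σ_{*,i}/∂x_j = −A_{x,*,j} ∘ σ_{*,i} + 2 σ_{*,*} (σ_{*,i} ∘ A_{x,*,j}) − A_{x,i,j} σ_{*,i}`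
(stated entrywise). -/
theorem stmt5 {n d : ℕ} (hn : 0 < n) (hd : 0 < d)
    (A : Matrix (Fin n) (Fin d) ℝ) (b : Fin n → ℝ) (x : Fin d → ℝ)
    (hs : ∀ i, sVec A b x i ≠ 0)
    (hrank : IsUnit ((matAx A b x)ᵀ * matAx A b x).det) (i : Fin n) (j : Fin d) :
    ∀ k, HasDerivAt (fun t : ℝ => sigM A b (Function.update x j t) k i)
      ((-(fun l => matAx A b x l j * sigM A b x l i)
        + (2 : ℝ) • (sigM A b x).mulVec (fun l => sigM A b x l i * matAx A b x l j)
        - matAx A b x i j • (fun l => sigM A b x l i)) k)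
      (x j) := by
  intro k
  have hx0 : Function.update x j (x j) = x := Function.update_eq_self j x
  -- s is affine in t
  have hskey : ∀ (t : ℝ) (p : Fin n),
      sVec A b (Function.update x j t) p = A p j * (t - x j) + sVec A b x p := by
    intro t p
    have hupd : Function.update x j t = x + Pi.single j (t - x j) := by
      ext l
      rcases eq_or_ne l j with h | h
      · subst h; simp
      · simp [Function.update_apply, h, Pi.single_apply]
    simp only [sVec, hupd, Matrix.mulVec_add, Matrix.mulVec_single, Pi.sub_apply, Pi.add_apply,
      Pi.smul_apply, op_smul_eq_mul, Matrix.col_apply]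
    ring
  have hsder : ∀ p : Fin n,
      HasDerivAt (fun t => sVec A b (Function.update x j t) p) (A p j) (x j) := by
    intro p
    have h2 : (fun t => sVec A b (Function.update x j t) p)
        = fun t => A p j * (t - x j) + sVec A b x p := funext fun t => hskey t p
    rw [h2]
    simpa using (((hasDerivAt_id (x j)).sub_const (x j)).const_mul (A p j)).add_const (sVec A b x p)
  -- the entrywise formula for A_x along the path
  set Ax := matAx A b x with hAxdef
  set axM : ℝ → Matrix (Fin n) (Fin d) ℝ :=
    fun t => Matrix.of fun p q => A p q * (sVec A b (Function.update x j t) p)⁻¹ with haxMdef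
  have haxM0 : axM (x j) = Ax := by
    ext p q
    show A p q * (sVec A b (Function.update x j (x j)) p)⁻¹ = Ax p q
    rw [hx0, hAxdef, matAx_apply A b x hs]
  have haxd : ∀ (p : Fin n) (q : Fin d),
      HasDerivAt (fun t => axM t p q) (-(Ax p j * Ax p q)) (x j) := by
    intro p q
    have hval : sVec A b (Function.update x j (x j)) p ≠ 0 := by rw [hx0]; exact hs p
    have h1 := ((hsder p).inv hval).const_mul (A p q)
    have h2 : A p q * (-(A p j) / sVec A b (Function.update x j (x j)) p ^ 2)
        = -(Ax p j * Ax p q) := by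
      rw [hx0, hAxdef, matAx_apply A b x hs, matAx_apply A b x hs]
      have := hs p
      field_simp
    rw [h2] at h1
    exact h1
  -- derivative of M t = (axM t)ᵀ * axM t
  set N₀ : Matrix (Fin d) (Fin d) ℝ := (Axᵀ * Ax)⁻¹ with hN₀def
  set M' : Matrix (Fin d) (Fin d) ℝ :=
    Matrix.of fun l m => ∑ p, (-(Ax p j * Ax p l) * Ax p m + Ax p l * -(Ax p j * Ax p m))
    with hM'def
  have hMder : HasDerivAt (fun t => (axM t)ᵀ * axM t) M' (x j) := by
    apply hasDerivAt_of_entries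
    intro l m
    have h2 : (fun t => ((axM t)ᵀ * axM t) l m) = fun t => ∑ p, axM t p l * axM t p m := by
      funext t; simp [Matrix.mul_apply]
    rw [h2]
    have h3 := HasDerivAt.fun_sum (u := (Finset.univ : Finset (Fin n)))
      (fun p _ => (haxd p l).mul (haxd p m))
    simp only [haxM0] at h3
    exact h3
  have hunit : IsUnit ((axM (x j))ᵀ * axM (x j)) := by
    rw [haxM0]
    exact (Matrix.isUnit_iff_isUnit_det _).2 hrank
  set Nd : Matrix (Fin d) (Fin d) ℝ := -(N₀ * M' * N₀) with hNddef
  have hNder : HasDerivAt (fun t => ((axM t)ᵀ * axM t)⁻¹) Nd (x j) := by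
    have h1 := hasDerivAt_matrix_inv hMder hunit
    simp only [haxM0] at h1
    exact h1
  have hNent : ∀ l m, HasDerivAt (fun t => ((axM t)ᵀ * axM t)⁻¹ l m) (Nd l m) (x j) :=
    fun l m => hasDerivAt_entry hNder l m
  -- eventual equality with the explicit formula
  have hne : ∀ᶠ t in nhds (x j), ∀ p : Fin n, sVec A b (Function.update x j t) p ≠ 0 := by
    rw [Filter.eventually_all]
    intro p
    exact (hsder p).continuousAt.eventually_ne (by rw [hx0]; exact hs p)
  have heq : (fun t : ℝ => sigM A b (Function.update x j t) k i) =ᶠ[nhds (x j)]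
      (fun t => ∑ m, (∑ l, axM t k l * ((axM t)ᵀ * axM t)⁻¹ l m) * axM t i m) := by
    filter_upwards [hne] with t ht
    have hmA : matAx A b (Function.update x j t) = axM t := by
      ext p q
      rw [matAx_apply A b _ ht]
      rfl
    show sigM A b (Function.update x j t) k i = _
    rw [sigM, hmA]
    simp [Matrix.mul_apply]
  -- the derivative of the explicit formula
  have hg' := HasDerivAt.fun_sum (u := (Finset.univ : Finset (Fin d)))
    (fun m _ => ((HasDerivAt.fun_sum (u := (Finset.univ : Finset (Fin d)))
      (fun l _ => (haxd k l).mul (hNent l m))).mul (haxd i m)))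
  have hfin := hg'.congr_of_eventuallyEq heq
  refine hfin.congr_deriv (Eq.symm ?_)
  simp only [haxM0, ← hN₀def, Pi.mul_apply]
  set Dm : Matrix (Fin n) (Fin n) ℝ := Matrix.diagonal (fun p => Ax p j) with hDmdef
  set σm : Matrix (Fin n) (Fin n) ℝ := sigM A b x with hσmdef
  have hσm : σm = Ax * N₀ * Axᵀ := rfl
  have stepA : (-(Dm * Ax) * N₀ * Axᵀ + Ax * Nd * Axᵀ + Ax * N₀ * (-(Dm * Ax))ᵀ) k i
      = ∑ m, ((∑ l, (-(Ax k j * Ax k l) * N₀ l m + Ax k l * Nd l m)) * Ax i m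
          + (∑ l, Ax k l * N₀ l m) * -(Ax i j * Ax i m)) := by
    simp only [hDmdef, Matrix.add_apply, Matrix.mul_apply, Matrix.transpose_apply,
      Matrix.neg_apply, Matrix.diagonal_apply, ite_mul, mul_ite, zero_mul, mul_zero,
      Finset.sum_ite_eq, Finset.sum_ite_eq', Finset.mem_univ, if_true]
    rw [← Finset.sum_add_distrib, ← Finset.sum_add_distrib]
    refine Finset.sum_congr rfl fun m _ => ?_
    rw [Finset.sum_add_distrib, add_mul]
  rw [← stepA]
  have hM'2 : M' = -((2:ℝ) • (Axᵀ * Dm * Ax)) := by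
    ext l m
    simp only [hDmdef, hM'def, Matrix.of_apply, Matrix.neg_apply, Matrix.smul_apply,
      Matrix.mul_apply, Matrix.transpose_apply, smul_eq_mul, Matrix.diagonal_apply,
      ite_mul, mul_ite, zero_mul, mul_zero, Finset.sum_ite_eq, Finset.sum_ite_eq',
      Finset.mem_univ, if_true]
    rw [Finset.mul_sum, ← Finset.sum_neg_distrib]
    exact Finset.sum_congr rfl fun p _ => by ring
  have stepB : -(Dm * Ax) * N₀ * Axᵀ + Ax * Nd * Axᵀ + Ax * N₀ * (-(Dm * Ax))ᵀ
      = -(Dm * σm) + (2:ℝ) • (σm * Dm * σm) - σm * Dm := by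
    rw [hσm, hNddef, hM'2]
    simp only [hDmdef, Matrix.transpose_neg, Matrix.transpose_mul, Matrix.diagonal_transpose,
      Matrix.neg_mul, Matrix.mul_neg, neg_neg, Matrix.smul_mul, Matrix.mul_smul,
      Matrix.mul_assoc, sub_eq_add_neg]
  rw [stepB]
  have hsum : ∑ p, σm k p * (σm p i * Ax p j) = ∑ p, σm k p * Ax p j * σm p i :=
    Finset.sum_congr rfl fun p _ => by ring
  simp only [hDmdef, Matrix.sub_apply, Matrix.add_apply, Matrix.neg_apply, Matrix.smul_apply,
    Matrix.mul_apply, smul_eq_mul, Matrix.diagonal_apply, ite_mul, mul_ite, zero_mul,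
    mul_zero, Finset.sum_ite_eq, Finset.sum_ite_eq', Finset.mem_univ, if_true,
    Pi.add_apply, Pi.sub_apply, Pi.neg_apply, Pi.smul_apply, Matrix.mulVec, dotProduct]
  rw [hsum]
  ring
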